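/- Let X be a compact topological 1-manifold with boundary. Then its boundary ∂X is a finite set with an even number of points. -/

import Mathlib

/-!
A boundary point `b` is joined by an arc `γ : [0, c] → X` to a second boundary point. The image of
such an arc is compact, and open because both its ends are boundary points; so it is the connected
component of `b`, and as no boundary point lies in the interior of an arc, that component meets
the boundary in exactly two points. The boundary is finite, being closed and discrete, so it splits
into pairs.

To find the second boundary point, suppose that no arc from `b` ends on the boundary. The
half-open arcs `γ '' [0, c)` from `b` are then open, and they are totally ordered by inclusion,
because two arcs from a boundary point can only part at the end of one of them. Their union is
also closed: near any point `x` of its closure some arc from `b` meets the chart interval around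
`x`, and following that arc until it first meets the interval, then running along the interval
past `x`, gives an arc from `b` through `x`. By compactness a single half-open arc `γ '' [0, c)`
then contains the whole component of `b`, including its own end point `γ c`, which is absurd.
-/

open Set Filter Topology
open scoped Manifold

theorem ContinuousOn.mem_Ioo_min_max_of_injOn {f : ℝ → ℝ} {p q t : ℝ}
    (hf : ContinuousOn f (Icc p q)) (hfi : InjOn f (Icc p q)) (ht : t ∈ Ioo p q) :
    f t ∈ Ioo (min (f p) (f q)) (max (f p) (f q)) := by
  have hp : p ∈ Icc p q := ⟨le_rfl, (ht.1.trans ht.2).le⟩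
  have hq : q ∈ Icc p q := ⟨(ht.1.trans ht.2).le, le_rfl⟩
  have ht' : t ∈ Icc p q := Ioo_subset_Icc_self ht
  rcases hf.strictMonoOn_of_injOn_Icc' (ht.1.trans ht.2).le hfi with h | h
  · exact ⟨min_lt_of_left_lt (h hp ht' ht.1), lt_max_of_lt_right (h ht' hq ht.2)⟩
  · exact ⟨min_lt_of_right_lt (h ht' hq ht.2), lt_max_of_lt_left (h hp ht' ht.1)⟩

section RealCoord

variable {X : Type*} [TopologicalSpace X]

structure IsRealCoord (V : Set X) (ψ : X → ℝ) : Prop where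
  isOpen : IsOpen V
  continuousOn : ContinuousOn ψ V
  injOn : InjOn ψ V

theorem IsRealCoord.mem_nhds_of_image_mem_nhdsWithin {V A : Set X} {ψ : X → ℝ} {x : X}
    (hψ : IsRealCoord V ψ) (hA : A ⊆ V) (hx : x ∈ V) (h : ψ '' A ∈ 𝓝[ψ '' V] (ψ x)) :
    A ∈ 𝓝 x := by
  obtain ⟨O, hO, hxO, hOA⟩ := mem_nhdsWithin.1 h
  filter_upwards [(hψ.continuousOn.isOpen_inter_preimage hψ.isOpen hO).mem_nhds ⟨hx, hxO⟩]
    with y ⟨hyV, hyO⟩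
  obtain ⟨a, ha, hay⟩ := hOA ⟨hyO, mem_image_of_mem ψ hyV⟩
  rwa [← hψ.injOn (hA ha) hyV hay]

end RealCoord

section Parametrisation

variable {X : Type*}

noncomputable def glue (γ δ : ℝ → X) (a t : ℝ) : X := if t ≤ a then γ t else δ (t - a)

variable {γ δ : ℝ → X} {a : ℝ}

theorem glue_of_le {t : ℝ} (ht : t ≤ a) : glue γ δ a t = γ t := if_pos ht

theorem glue_add (hend : γ a = δ 0) {u : ℝ} (hu : 0 ≤ u) : glue γ δ a (a + u) = δ u := by
  rcases hu.eq_or_lt with rfl | hu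
  · simp [glue, hend]
  · simp [glue, hu]

theorem image_comp_lineMap (σ : ℝ → X) (s₀ s : ℝ) :
    (σ ∘ AffineMap.lineMap (k := ℝ) s₀ s) '' Icc 0 1 = σ '' uIcc s₀ s := by
  rw [image_comp, ← segment_eq_image_lineMap, segment_eq_uIcc]

theorem image_comp_sub_Ico (γ : ℝ → X) (c : ℝ) :
    (fun t => γ (c - t)) '' Ico 0 c = γ '' Ioc 0 c := by
  rw [← image_image γ (fun t => c - t), image_const_sub_Ico, sub_self, sub_zero]

end Parametrisation

section Arc

variable {X : Type*} [TopologicalSpace X]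

structure IsArc (γ : ℝ → X) (c : ℝ) : Prop where
  nonneg : 0 ≤ c
  continuousOn : ContinuousOn γ (Icc 0 c)
  injOn : InjOn γ (Icc 0 c)

namespace IsArc

variable {γ : ℝ → X} {c : ℝ}

theorem const (x : X) : IsArc (fun _ => x) 0 :=
  ⟨le_rfl, continuousOn_const, by simp [InjOn]⟩

theorem mono (hγ : IsArc γ c) {c' : ℝ} (hc' : 0 ≤ c') (hc : c' ≤ c) : IsArc γ c' :=
  ⟨hc', hγ.continuousOn.mono (Icc_subset_Icc_right hc), hγ.injOn.mono (Icc_subset_Icc_right hc)⟩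

theorem isCompact_image (hγ : IsArc γ c) : IsCompact (γ '' Icc 0 c) :=
  isCompact_Icc.image_of_continuousOn hγ.continuousOn

theorem isPreconnected_image (hγ : IsArc γ c) : IsPreconnected (γ '' Icc 0 c) :=
  isPreconnected_Icc.image γ hγ.continuousOn

theorem reverse (hγ : IsArc γ c) : IsArc (fun t => γ (c - t)) c := by
  have hmaps : MapsTo (fun t => c - t) (Icc 0 c) (Icc 0 c) :=
    fun t ht => ⟨sub_nonneg.2 ht.2, sub_le_self c ht.1⟩
  refine ⟨hγ.nonneg, hγ.continuousOn.comp (continuous_sub_left c).continuousOn hmaps, ?_⟩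
  exact hγ.injOn.comp (fun s _ t _ h => sub_right_injective h) hmaps

theorem exists_Icc_mapsTo (hγ : IsArc γ c) {t : ℝ} (ht : t ∈ Ioo 0 c) {V : Set X}
    (hV : V ∈ 𝓝 (γ t)) :
    ∃ δ > 0, Icc (t - δ) (t + δ) ⊆ Icc 0 c ∧ MapsTo γ (Icc (t - δ) (t + δ)) V := by
  have hIcc : Icc 0 c ∈ 𝓝 t := Icc_mem_nhds ht.1 ht.2
  obtain ⟨ε, hε, hball⟩ := Metric.mem_nhds_iff.1
    (inter_mem hIcc ((hγ.continuousOn.continuousAt hIcc).preimage_mem_nhds hV))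
  have hsub : Icc (t - ε / 2) (t + ε / 2) ⊆ Icc 0 c ∩ γ ⁻¹' V := by
    rw [← Real.closedBall_eq_Icc]
    exact (Metric.closedBall_subset_ball (half_lt_self hε)).trans hball
  exact ⟨ε / 2, half_pos hε, fun s hs => (hsub hs).1, fun s hs => (hsub hs).2⟩

theorem comp_isRealCoord (hγ : IsArc γ c) {V : Set X} {ψ : X → ℝ} (hψ : IsRealCoord V ψ)
    {I : Set ℝ} (hI : I ⊆ Icc 0 c) (hmaps : MapsTo γ I V) :
    ContinuousOn (ψ ∘ γ) I ∧ InjOn (ψ ∘ γ) I :=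
  ⟨hψ.continuousOn.comp (hγ.continuousOn.mono hI) hmaps,
    hψ.injOn.comp (hγ.injOn.mono hI) hmaps⟩

theorem not_isMinOn (hγ : IsArc γ c) {t : ℝ} (ht : t ∈ Ioo 0 c) {V : Set X} {ψ : X → ℝ}
    (hψ : IsRealCoord V ψ) (hV : γ t ∈ V) : ¬ IsMinOn ψ V (γ t) := by
  intro hmin
  obtain ⟨δ, hδ, hsub, hmaps⟩ := hγ.exists_Icc_mapsTo ht (hψ.isOpen.mem_nhds hV)
  obtain ⟨hf, hfi⟩ := hγ.comp_isRealCoord hψ hsub hmaps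
  have hbetween := hf.mem_Ioo_min_max_of_injOn hfi
    (⟨by linarith, by linarith⟩ : t ∈ Ioo (t - δ) (t + δ))
  exact hbetween.1.not_ge (le_min (hmin (hmaps ⟨le_rfl, by linarith⟩))
    (hmin (hmaps ⟨by linarith, le_rfl⟩)))

theorem image_mem_nhds_of_isRealCoord (hγ : IsArc γ c) {t : ℝ} (ht : t ∈ Ioo 0 c)
    {V : Set X} {ψ : X → ℝ} (hψ : IsRealCoord V ψ) (hV : γ t ∈ V) :
    γ '' Icc 0 c ∈ 𝓝 (γ t) := by
  obtain ⟨δ, hδ, hsub, hmaps⟩ := hγ.exists_Icc_mapsTo ht (hψ.isOpen.mem_nhds hV)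
  obtain ⟨hf, hfi⟩ := hγ.comp_isRealCoord hψ hsub hmaps
  have hbetween := hf.mem_Ioo_min_max_of_injOn hfi
    (⟨by linarith, by linarith⟩ : t ∈ Ioo (t - δ) (t + δ))
  have hivt : uIcc ((ψ ∘ γ) (t - δ)) ((ψ ∘ γ) (t + δ)) ⊆ ψ '' (γ '' Icc (t - δ) (t + δ)) := by
    have hle : t - δ ≤ t + δ := by linarith
    have hivt := intermediate_value_uIcc (f := ψ ∘ γ) (by rwa [uIcc_of_le hle])
    rwa [uIcc_of_le hle, image_comp] at hivt
  refine mem_of_superset (hψ.mem_nhds_of_image_mem_nhdsWithin (image_subset_iff.2 hmaps) hV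
    (mem_nhdsWithin_of_mem_nhds (mem_of_superset (Icc_mem_nhds hbetween.1 hbetween.2) hivt)))
    (image_mono hsub)

theorem image_Ico_mem_nhds_of_isMinOn (hγ : IsArc γ c) (hc : 0 < c) {V : Set X}
    {ψ : X → ℝ} (hψ : IsRealCoord V ψ) (hV : γ 0 ∈ V) (hmin : IsMinOn ψ V (γ 0)) :
    γ '' Ico 0 c ∈ 𝓝 (γ 0) := by
  have hpre : γ ⁻¹' V ∈ 𝓝[≥] 0 := by
    rw [← nhdsWithin_Icc_eq_nhdsGE hc]
    exact (hγ.continuousOn 0 ⟨le_rfl, hc.le⟩).preimage_mem_nhdsWithin (hψ.isOpen.mem_nhds hV)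
  obtain ⟨u, hu, hmaps'⟩ := mem_nhdsGE_iff_exists_Icc_subset.1 hpre
  set δ := min u (c / 2)
  have hδ : 0 < δ := lt_min hu (half_pos hc)
  have hδc : δ < c := (min_le_right _ _).trans_lt (half_lt_self hc)
  have hsub : Icc 0 δ ⊆ Icc 0 c := Icc_subset_Icc_right hδc.le
  have hmaps : MapsTo γ (Icc 0 δ) V := fun s hs =>
    hmaps' (Icc_subset_Icc_right (min_le_left _ _) hs)
  obtain ⟨hf, hfi⟩ := hγ.comp_isRealCoord hψ hsub hmaps
  have hlt : (ψ ∘ γ) 0 < (ψ ∘ γ) δ := (hmin (hmaps ⟨hδ.le, le_rfl⟩)).lt_of_ne fun h =>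
    hδ.ne (hfi ⟨le_rfl, hδ.le⟩ ⟨hδ.le, le_rfl⟩ h)
  have hivt : Icc ((ψ ∘ γ) 0) ((ψ ∘ γ) δ) ⊆ ψ '' (γ '' Icc 0 δ) := by
    rw [← image_comp]; exact intermediate_value_Icc hδ.le hf
  refine mem_of_superset (hψ.mem_nhds_of_image_mem_nhdsWithin (image_subset_iff.2 hmaps) hV
    (mem_nhdsWithin.2 ⟨Iio ((ψ ∘ γ) δ), isOpen_Iio, hlt, ?_⟩))
    (image_mono (Icc_subset_Ico_right hδc))
  rintro _ ⟨hy, v, hv, rfl⟩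
  exact hivt ⟨hmin hv, le_of_lt hy⟩

theorem image_subset_of_isPreconnected [T2Space X] (hγ : IsArc γ c) {A : Set X}
    (hA : IsPreconnected A) (hAK : A ⊆ γ '' Icc 0 c) (h0 : γ 0 ∈ A) (hc : γ c ∈ A) :
    γ '' Icc 0 c ⊆ A := by
  rintro _ ⟨u, hu, rfl⟩
  by_contra hu'
  have hu0 : 0 < u := hu.1.lt_of_ne (by rintro rfl; exact hu' h0)
  have huc : u < c := hu.2.lt_of_ne (by rintro rfl; exact hu' hc)
  have hclosed : ∀ a b, 0 ≤ a → b ≤ c → IsClosed (γ '' Icc a b) := fun a b ha hb =>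
    (isCompact_Icc.image_of_continuousOn (hγ.continuousOn.mono (Icc_subset_Icc ha hb))).isClosed
  have hmem : ∀ {s}, s ∈ Icc 0 c → ∀ {a b}, 0 ≤ a → b ≤ c →
      (γ s ∈ (γ '' Icc a b)ᶜ ↔ s ∉ Icc a b) := fun hs _ _ ha hb =>
    not_congr (hγ.injOn.mem_image_iff (Icc_subset_Icc ha hb) hs)
  -- `A` would be split by the two closed halves `γ '' [0, u]` and `γ '' [u, c]`.
  have hcover : A ⊆ (γ '' Icc u c)ᶜ ∪ (γ '' Icc 0 u)ᶜ := by
    intro y hyA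
    obtain ⟨s, hs, rfl⟩ := hAK hyA
    rw [mem_union, hmem hs hu.1 le_rfl, hmem hs le_rfl hu.2, ← not_and_or]
    rintro ⟨h₁, h₂⟩
    exact hu' (le_antisymm h₂.2 h₁.1 ▸ hyA)
  have h₀ : γ 0 ∈ (γ '' Icc u c)ᶜ :=
    (hmem ⟨le_rfl, hγ.nonneg⟩ hu.1 le_rfl).2 fun h => hu0.not_ge h.1
  have h₁ : γ c ∈ (γ '' Icc 0 u)ᶜ :=
    (hmem ⟨hγ.nonneg, le_rfl⟩ le_rfl hu.2).2 fun h => huc.not_ge h.2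
  obtain ⟨_, hyA, hy₁, hy₂⟩ := hA _ _ (hclosed u c hu.1 le_rfl).isOpen_compl
    (hclosed 0 u le_rfl hu.2).isOpen_compl hcover ⟨γ 0, h0, h₀⟩ ⟨γ c, hc, h₁⟩
  obtain ⟨s, hs, rfl⟩ := hAK hyA
  rw [hmem hs hu.1 le_rfl] at hy₁
  rw [hmem hs le_rfl hu.2] at hy₂
  exact hy₂ ⟨hs.1, le_of_not_ge fun h => hy₁ ⟨h, hs.2⟩⟩

theorem image_Ico_subset_of_image_subset [T2Space X] {γ' : ℝ → X} {c' : ℝ} (hγ : IsArc γ c)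
    (hγ' : IsArc γ' c') (h0 : γ 0 = γ' 0) (h : γ '' Icc 0 c ⊆ γ' '' Icc 0 c') :
    γ '' Ico 0 c ⊆ γ' '' Ico 0 c' := by
  rintro _ ⟨s, hs, rfl⟩
  obtain ⟨u, hu, hus⟩ := h ⟨s, Ico_subset_Icc_self hs, rfl⟩
  rcases hu.2.lt_or_eq with huc | rfl
  · exact ⟨u, ⟨hu.1, huc⟩, hus⟩
  -- Otherwise `γ` runs through the whole of `γ'` before time `s`, leaving no room for `γ c`.
  have hsub : γ' '' Icc 0 u ⊆ γ '' Icc 0 s :=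
    hγ'.image_subset_of_isPreconnected (isPreconnected_Icc.image γ
      (hγ.continuousOn.mono (Icc_subset_Icc_right hs.2.le)))
      ((image_mono (Icc_subset_Icc_right hs.2.le)).trans h) ⟨0, ⟨le_rfl, hs.1⟩, h0⟩
      ⟨s, ⟨hs.1, le_rfl⟩, hus.symm⟩
  obtain ⟨s', hs', he⟩ := hsub (h ⟨c, ⟨hγ.nonneg, le_rfl⟩, rfl⟩)
  have := hγ.injOn ⟨hs'.1, hs'.2.trans hs.2.le⟩ ⟨hγ.nonneg, le_rfl⟩ he
  linarith [hs'.2, hs.2]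

theorem comp_lineMap {σ : ℝ → X} {d s₀ s : ℝ} (hσ : IsArc σ d) (hs₀ : s₀ ∈ Icc 0 d)
    (hs : s ∈ Icc 0 d) (hne : s₀ ≠ s) : IsArc (σ ∘ AffineMap.lineMap (k := ℝ) s₀ s) 1 := by
  have hmaps : MapsTo (AffineMap.lineMap (k := ℝ) s₀ s) (Icc 0 1) (Icc 0 d) := fun u hu =>
    uIcc_subset_Icc hs₀ hs (segment_eq_uIcc s₀ s ▸ segment_eq_image_lineMap ℝ s₀ s ▸
      mem_image_of_mem _ hu)
  exact ⟨zero_le_one, hσ.continuousOn.comp AffineMap.lineMap_continuous.continuousOn hmaps,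
    hσ.injOn.comp (AffineMap.lineMap_injective ℝ hne).injOn hmaps⟩

end IsArc

theorem isArc_glue {γ δ : ℝ → X} {a d : ℝ} (hγ : IsArc γ a) (hδ : IsArc δ d)
    (hend : γ a = δ 0) (hdisj : Disjoint (γ '' Ico 0 a) (δ '' Ioc 0 d)) :
    IsArc (glue γ δ a) (a + d) := by
  have ha := hγ.nonneg
  have hd := hδ.nonneg
  have e₁ : EqOn (glue γ δ a) γ (Icc 0 a) := fun t ht => glue_of_le ht.2
  have e₂ : EqOn (glue γ δ a) (fun t => δ (t - a)) (Icc a (a + d)) := fun t ht => by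
    simpa using glue_add (δ := δ) hend (sub_nonneg.2 ht.1)
  have hmaps : MapsTo (fun t => t - a) (Icc a (a + d)) (Icc 0 d) :=
    fun t ht => ⟨sub_nonneg.2 ht.1, by linarith [ht.2]⟩
  refine ⟨by linarith, ?_, ?_⟩
  · rw [← Icc_union_Icc_eq_Icc ha (le_add_of_nonneg_right hd)]
    exact (hγ.continuousOn.congr e₁).union_of_isClosed
      ((hδ.continuousOn.comp (continuousOn_id.sub continuousOn_const) hmaps).congr e₂)
      isClosed_Icc isClosed_Icc
  · rw [← Icc_union_Ioc_eq_Icc ha (le_add_of_nonneg_right hd),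
      injOn_union (disjoint_left.2 fun t h₁ h₂ => h₂.1.not_ge h₁.2)]
    refine ⟨hγ.injOn.congr e₁.symm, ?_, fun t ht s hs h => ?_⟩
    · exact (hδ.injOn.comp sub_left_injective.injOn (hmaps.mono_left Ioc_subset_Icc_self)).congr
        (e₂.mono Ioc_subset_Icc_self).symm
    rw [e₁ ht, e₂ (Ioc_subset_Icc_self hs)] at h
    rcases ht.2.lt_or_eq with hta | rfl
    · exact hdisj.ne_of_mem ⟨t, ⟨ht.1, hta⟩, rfl⟩
        ⟨s - a, ⟨sub_pos.2 hs.1, by linarith [hs.2]⟩, rfl⟩ h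
    · rw [hend] at h
      have := hδ.injOn ⟨le_rfl, hd⟩ (hmaps (Ioc_subset_Icc_self hs)) h
      linarith [hs.1]

/-- `s₀` is where `γ` first meets `σ`; the new arcs follow `γ` up to there and then run along
`σ`. -/
theorem IsArc.exists_arc_to_segment [T2Space X] {γ σ : ℝ → X} {c d : ℝ} (hγ : IsArc γ c)
    (hσ : IsArc σ d) (hmeet : (γ '' Icc 0 c ∩ σ '' Icc 0 d).Nonempty) :
    ∃ s₀ ∈ Icc 0 d, ∀ s ∈ Icc 0 d, ∃ γ' c', IsArc γ' c' ∧ γ' 0 = γ 0 ∧ γ' c' = σ s ∧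
      σ '' uIcc s₀ s ⊆ γ' '' Icc 0 c' := by
  set T := Icc 0 c ∩ γ ⁻¹' (σ '' Icc 0 d)
  have hT : IsClosed T :=
    hγ.continuousOn.preimage_isClosed_of_isClosed isClosed_Icc hσ.isCompact_image.isClosed
  obtain ⟨_, ⟨t, ht, rfl⟩, htσ⟩ := hmeet
  have hbdd : BddBelow T := ⟨0, fun _ h => h.1.1⟩
  have ht₀ : sInf T ∈ T := hT.csInf_mem ⟨t, ht, htσ⟩ hbdd
  set t₀ := sInf T
  obtain ⟨s₀, hs₀, hσs₀⟩ := ht₀.2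
  have hγ₀ : IsArc γ t₀ := hγ.mono ht₀.1.1 ht₀.1.2
  have hbefore : Disjoint (γ '' Ico 0 t₀) (σ '' Icc 0 d) := by
    rw [disjoint_left]
    rintro _ ⟨u, hu, rfl⟩ huσ
    exact hu.2.not_ge (csInf_le hbdd ⟨⟨hu.1, hu.2.le.trans ht₀.1.2⟩, huσ⟩)
  refine ⟨s₀, hs₀, fun s hs => ?_⟩
  rcases eq_or_ne s₀ s with rfl | hne
  · refine ⟨γ, t₀, hγ₀, rfl, hσs₀.symm, ?_⟩
    rw [uIcc_self, image_singleton, singleton_subset_iff, hσs₀]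
    exact mem_image_of_mem γ ⟨ht₀.1.1, le_rfl⟩
  have hend : γ t₀ = (σ ∘ AffineMap.lineMap (k := ℝ) s₀ s) 0 := by simp [hσs₀]
  refine ⟨_, t₀ + 1, isArc_glue hγ₀ (hσ.comp_lineMap hs₀ hs hne) hend ?_, glue_of_le ht₀.1.1,
    by simp [glue_add hend zero_le_one], ?_⟩
  · refine hbefore.mono_right ((image_mono Ioc_subset_Icc_self).trans ?_)
    rw [image_comp_lineMap]
    exact image_mono (uIcc_subset_Icc hs₀ hs)
  · rw [← image_comp_lineMap]
    rintro _ ⟨u, hu, rfl⟩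
    exact ⟨t₀ + u, ⟨by linarith [ht₀.1.1, hu.1], by linarith [hu.2]⟩, glue_add hend hu.1⟩

end Arc

noncomputable def euclideanFinOneEquiv : EuclideanSpace ℝ (Fin 1) ≃L[ℝ] ℝ :=
  (EuclideanSpace.equiv (Fin 1) ℝ).trans (ContinuousLinearEquiv.funUnique (Fin 1) ℝ ℝ)

section Chart

variable {X : Type*} [TopologicalSpace X] [ChartedSpace (EuclideanHalfSpace 1) X]

noncomputable def chartCoord (x y : X) : ℝ := euclideanFinOneEquiv (extChartAt (𝓡∂ 1) x y)

theorem isRealCoord_chartCoord (x : X) :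
    IsRealCoord (extChartAt (𝓡∂ 1) x).source (chartCoord x) :=
  ⟨isOpen_extChartAt_source x,
    euclideanFinOneEquiv.continuous.comp_continuousOn (continuousOn_extChartAt x),
    euclideanFinOneEquiv.injective.comp_injOn (extChartAt (𝓡∂ 1) x).injOn⟩

theorem chartCoord_nonneg (x y : X) : 0 ≤ chartCoord x y := by
  have : extChartAt (𝓡∂ 1) x y ∈ range (𝓡∂ 1) := by
    rw [extChartAt_coe]; exact mem_range_self _
  rw [range_modelWithCornersEuclideanHalfSpace] at this
  exact this

theorem chartCoord_self_eq_zero_iff (x : X) : chartCoord x x = 0 ↔ x ∈ (𝓡∂ 1).boundary X := by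
  change _ ↔ (𝓡∂ 1).IsBoundaryPoint x
  rw [ModelWithCorners.isBoundaryPoint_iff, frontier_range_modelWithCornersEuclideanHalfSpace]
  exact eq_comm

theorem isMinOn_chartCoord {x : X} (hx : x ∈ (𝓡∂ 1).boundary X) :
    IsMinOn (chartCoord x) (extChartAt (𝓡∂ 1) x).source x :=
  isMinOn_iff.2 fun y _ => ((chartCoord_self_eq_zero_iff x).2 hx).symm ▸ chartCoord_nonneg x y

noncomputable def chartCoordSymm (x : X) (s : ℝ) : X :=
  (extChartAt (𝓡∂ 1) x).symm (euclideanFinOneEquiv.symm s)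

def chartCoordTarget (x : X) : Set ℝ :=
  euclideanFinOneEquiv.symm ⁻¹' (extChartAt (𝓡∂ 1) x).target

theorem chartCoordTarget_mem_nhdsWithin (x : X) :
    chartCoordTarget x ∈ 𝓝[Ici 0] (chartCoord x x) := by
  have hrange : euclideanFinOneEquiv.symm '' Ici 0 ⊆ range (𝓡∂ 1) := by
    rintro _ ⟨s, hs, rfl⟩
    rw [range_modelWithCornersEuclideanHalfSpace]
    exact hs
  have htarget : (extChartAt (𝓡∂ 1) x).target ∈
      𝓝[range (𝓡∂ 1)] (euclideanFinOneEquiv.symm (chartCoord x x)) := by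
    rw [chartCoord, ContinuousLinearEquiv.symm_apply_apply]
    exact extChartAt_target_mem_nhdsWithin x
  exact euclideanFinOneEquiv.symm.continuous.continuousWithinAt.preimage_mem_nhdsWithin'
    (nhdsWithin_mono _ hrange htarget)

theorem continuousOn_chartCoordSymm (x : X) :
    ContinuousOn (chartCoordSymm x) (chartCoordTarget x) :=
  (continuousOn_extChartAt_symm x).comp euclideanFinOneEquiv.symm.continuous.continuousOn
    fun _ hs => hs

theorem chartCoord_chartCoordSymm {x : X} {s : ℝ} (hs : s ∈ chartCoordTarget x) :
    chartCoord x (chartCoordSymm x s) = s := by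
  rw [chartCoord, chartCoordSymm, (extChartAt (𝓡∂ 1) x).right_inv hs,
    ContinuousLinearEquiv.apply_symm_apply]

theorem chartCoordSymm_chartCoord {x y : X} (hy : y ∈ (extChartAt (𝓡∂ 1) x).source) :
    chartCoordSymm x (chartCoord x y) = y := by
  rw [chartCoord, chartCoordSymm, ContinuousLinearEquiv.symm_apply_apply,
    (extChartAt (𝓡∂ 1) x).left_inv hy]

/-- The arc is the inverse of the chart at `x` on a small interval around the coordinate of `x`,
shifted to start at `0`. -/
theorem exists_isArc_mem_nhds (x : X) : ∃ σ : ℝ → X, ∃ p d : ℝ, IsArc σ d ∧ p ∈ Ico 0 d ∧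
    (p = 0 ↔ x ∈ (𝓡∂ 1).boundary X) ∧ σ p = x ∧ σ '' Icc 0 d ∈ 𝓝 x := by
  set u := chartCoord x x
  have hu : 0 ≤ u := chartCoord_nonneg x x
  obtain ⟨ε, hε, hball⟩ := Metric.mem_nhdsWithin_iff.1 (chartCoordTarget_mem_nhdsWithin x)
  set lo := max 0 (u - ε / 2)
  have hlo₀ : 0 ≤ lo := le_max_left _ _
  have hlo₁ : u - ε / 2 ≤ lo := le_max_right _ _
  have hlo : lo ≤ u := max_le hu (by linarith)
  set d := u + ε / 2 - lo with hd
  have htarget : MapsTo (lo + ·) (Icc 0 d) (chartCoordTarget x) := fun s hs =>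
    hball ⟨by
      rw [Metric.mem_ball, Real.dist_eq, abs_sub_lt_iff]; constructor <;> linarith [hs.1, hs.2],
      show 0 ≤ lo + s by linarith [hs.1]⟩
  have hσ : IsArc (fun s => chartCoordSymm x (lo + s)) d := by
    refine ⟨by linarith, (continuousOn_chartCoordSymm x).comp
      (continuous_const_add lo).continuousOn htarget, fun s hs t ht h => ?_⟩
    have := congrArg (chartCoord x) h
    rw [chartCoord_chartCoordSymm (htarget hs), chartCoord_chartCoordSymm (htarget ht)] at this
    linarith
  refine ⟨_, u - lo, d, hσ, ⟨by linarith, by linarith⟩, ?_, ?_, ?_⟩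
  · rw [← chartCoord_self_eq_zero_iff, sub_eq_zero]
    constructor
    · intro h
      by_contra hu0
      exact (max_lt (hu.lt_of_ne (Ne.symm hu0)) (by linarith) : lo < u).ne' h
    · intro h
      change u = 0 at h
      change u = max 0 (u - ε / 2)
      rw [h, max_eq_left (by linarith)]
  · simp only [add_sub_cancel]
    exact chartCoordSymm_chartCoord (mem_extChartAt_source x)
  · have hW : (extChartAt (𝓡∂ 1) x).source ∩ chartCoord x ⁻¹' Ioo (u - ε / 2) (u + ε / 2) ∈ 𝓝 x :=
      ((isRealCoord_chartCoord x).continuousOn.isOpen_inter_preimage (isOpen_extChartAt_source x)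
        isOpen_Ioo).mem_nhds ⟨mem_extChartAt_source x, by constructor <;> linarith⟩
    refine mem_of_superset hW fun y ⟨hyV, hy⟩ => ⟨chartCoord x y - lo,
      ⟨sub_nonneg.2 (max_le (chartCoord_nonneg x y) hy.1.le), by linarith [hy.2]⟩, ?_⟩
    simp only [add_sub_cancel]
    exact chartCoordSymm_chartCoord hyV

end Chart

section OneManifold

variable {X : Type*} [TopologicalSpace X] [ChartedSpace (EuclideanHalfSpace 1) X]

namespace IsArc

variable {γ : ℝ → X} {c : ℝ}

theorem image_mem_nhds (hγ : IsArc γ c) {t : ℝ} (ht : t ∈ Ioo 0 c) : γ '' Icc 0 c ∈ 𝓝 (γ t) :=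
  hγ.image_mem_nhds_of_isRealCoord ht (isRealCoord_chartCoord (γ t)) (mem_extChartAt_source _)

theorem apply_notMem_boundary (hγ : IsArc γ c) {t : ℝ} (ht : t ∈ Ioo 0 c) :
    γ t ∉ (𝓡∂ 1).boundary X := fun hb =>
  hγ.not_isMinOn ht (isRealCoord_chartCoord (γ t)) (mem_extChartAt_source _)
    (isMinOn_chartCoord hb)

theorem image_Ico_mem_nhds (hγ : IsArc γ c) (hc : 0 < c) (hb : γ 0 ∈ (𝓡∂ 1).boundary X) :
    γ '' Ico 0 c ∈ 𝓝 (γ 0) :=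
  hγ.image_Ico_mem_nhds_of_isMinOn hc (isRealCoord_chartCoord (γ 0)) (mem_extChartAt_source _)
    (isMinOn_chartCoord hb)

theorem isOpen_image_Ico [T1Space X] (hγ : IsArc γ c) (hb : γ 0 ∈ (𝓡∂ 1).boundary X) :
    IsOpen (γ '' Ico 0 c) := by
  refine isOpen_iff_mem_nhds.2 ?_
  rintro _ ⟨t, ht, rfl⟩
  rcases ht.1.eq_or_lt with rfl | ht0
  · exact hγ.image_Ico_mem_nhds (ht.1.trans_lt ht.2) hb
  have hne : γ t ≠ γ c := fun h => ht.2.ne (hγ.injOn ⟨ht.1, ht.2.le⟩ ⟨hγ.nonneg, le_rfl⟩ h)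
  refine mem_of_superset (inter_mem (hγ.image_mem_nhds ⟨ht0, ht.2⟩) (compl_singleton_mem_nhds hne))
    ?_
  rintro _ ⟨⟨s, hs, rfl⟩, hsc⟩
  exact ⟨s, ⟨hs.1, hs.2.lt_of_ne fun h => hsc (h ▸ rfl)⟩, rfl⟩

theorem isOpen_image [T1Space X] (hγ : IsArc γ c) (hc : 0 < c) (h0 : γ 0 ∈ (𝓡∂ 1).boundary X)
    (hc' : γ c ∈ (𝓡∂ 1).boundary X) : IsOpen (γ '' Icc 0 c) := by
  have hU := hγ.isOpen_image_Ico h0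
  have hU' : IsOpen (γ '' Ioc 0 c) :=
    image_comp_sub_Ico γ c ▸ hγ.reverse.isOpen_image_Ico (by simpa using hc')
  refine isOpen_iff_mem_nhds.2 ?_
  rintro _ ⟨t, ht, rfl⟩
  rcases ht.2.lt_or_eq with htc | rfl
  · exact mem_of_superset (hU.mem_nhds ⟨t, ⟨ht.1, htc⟩, rfl⟩) (image_mono Ico_subset_Icc_self)
  · exact mem_of_superset (hU'.mem_nhds ⟨t, ⟨hc, le_rfl⟩, rfl⟩) (image_mono Ioc_subset_Icc_self)

/-- Where `γ` first leaves the image of `γ'`, that image is not a neighbourhood, so this can only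
happen at the end of `γ'`. -/
theorem image_subset_or_image_subset [T2Space X] {γ' : ℝ → X} {c' : ℝ} (hγ : IsArc γ c)
    (hγ' : IsArc γ' c') (h0 : γ 0 = γ' 0) (hb : γ' 0 ∈ (𝓡∂ 1).boundary X) :
    γ '' Icc 0 c ⊆ γ' '' Icc 0 c' ∨ γ' '' Icc 0 c' ⊆ γ '' Icc 0 c := by
  refine or_iff_not_imp_left.2 fun hnot => ?_
  obtain ⟨_, ⟨t, ht, rfl⟩, htK⟩ := not_subset.1 hnot
  set K := γ' '' Icc 0 c'
  set S := Icc 0 c \ γ ⁻¹' K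
  have hbdd : BddBelow S := ⟨0, fun _ h => h.1.1⟩
  have hτS : sInf S ∈ closure S := csInf_mem_closure ⟨t, ht, htK⟩ hbdd
  set τ := sInf S
  have hτ : τ ∈ Icc 0 c := isClosed_Icc.closure_subset_iff.2 sdiff_subset hτS
  have hT : IsClosed (Icc 0 c ∩ γ ⁻¹' K) :=
    hγ.continuousOn.preimage_isClosed_of_isClosed isClosed_Icc hγ'.isCompact_image.isClosed
  have hbefore : Icc 0 τ ⊆ Icc 0 c ∩ γ ⁻¹' K := by
    rcases hτ.1.eq_or_lt with hτ0 | hτ0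
    · rw [← hτ0, Icc_self, singleton_subset_iff]
      exact ⟨⟨le_rfl, hγ.nonneg⟩, ⟨0, ⟨le_rfl, hγ'.nonneg⟩, h0.symm⟩⟩
    rw [← closure_Ico hτ0.ne, hT.closure_subset_iff]
    intro s hs
    have hs' : s ∈ Icc 0 c := ⟨hs.1, hs.2.le.trans hτ.2⟩
    exact ⟨hs', not_not.1 fun h => hs.2.not_ge (csInf_le hbdd ⟨hs', h⟩)⟩
  have hnot_nhds : K ∉ 𝓝 (γ τ) := fun hK => by
    obtain ⟨_, hsK, ⟨s, hs, rfl⟩⟩ := mem_closure_iff_nhds.1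
      (((hγ.continuousOn τ hτ).mono sdiff_subset).mem_closure_image hτS) K hK
    exact hs.2 hsK
  obtain ⟨u, hu, hτu⟩ := (hbefore ⟨hτ.1, le_rfl⟩).2
  rcases hu.2.lt_or_eq with huc | rfl
  · rcases hu.1.eq_or_lt with rfl | hu0
    · exact absurd (mem_of_superset (hγ'.image_Ico_mem_nhds huc hb)
        (image_mono Ico_subset_Icc_self)) (hτu ▸ hnot_nhds)
    · exact absurd (hγ'.image_mem_nhds ⟨hu0, huc⟩) (hτu ▸ hnot_nhds)
  · refine (hγ'.image_subset_of_isPreconnected (isPreconnected_Icc.image γ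
      (hγ.continuousOn.mono (Icc_subset_Icc_right hτ.2))) (image_subset_iff.2 fun s hs =>
      (hbefore hs).2) ⟨0, ⟨le_rfl, hτ.1⟩, h0⟩ ⟨τ, ⟨hτ.1, le_rfl⟩, hτu.symm⟩).trans ?_
    exact image_mono (Icc_subset_Icc_right hτ.2)

theorem image_eq_connectedComponent [T2Space X] (hγ : IsArc γ c) (hc : 0 < c)
    (h0 : γ 0 ∈ (𝓡∂ 1).boundary X) (hc' : γ c ∈ (𝓡∂ 1).boundary X) :
    γ '' Icc 0 c = connectedComponent (γ 0) := by
  have h0K : γ 0 ∈ γ '' Icc 0 c := mem_image_of_mem γ ⟨le_rfl, hγ.nonneg⟩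
  exact (hγ.isPreconnected_image.subset_connectedComponent h0K).antisymm
    (IsClopen.connectedComponent_subset
      ⟨hγ.isCompact_image.isClosed, hγ.isOpen_image hc h0 hc'⟩ h0K)

end IsArc

theorem exists_mem_nhds_inter_boundary_subset [T1Space X] (x : X) :
    ∃ N ∈ 𝓝 x, N ∩ (𝓡∂ 1).boundary X ⊆ {x} := by
  obtain ⟨σ, p, d, hσ, -, -, -, hN⟩ := exists_isArc_mem_nhds x
  refine ⟨σ '' Icc 0 d ∩ ({σ 0, σ d} \ {x})ᶜ,
    inter_mem hN ((toFinite _).isClosed.compl_mem_nhds fun h => h.2 rfl), ?_⟩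
  rintro _ ⟨⟨⟨s, hs, rfl⟩, hends⟩, hb⟩
  by_contra hne
  rcases hs.1.eq_or_lt with rfl | hs0
  · exact hends ⟨Or.inl rfl, hne⟩
  rcases hs.2.eq_or_lt with rfl | hsd
  · exact hends ⟨Or.inr rfl, hne⟩
  exact hσ.apply_notMem_boundary ⟨hs0, hsd⟩ hb

theorem isClosed_boundary [T1Space X] : IsClosed ((𝓡∂ 1).boundary X) := by
  refine isOpen_compl_iff.1 (isOpen_iff_mem_nhds.2 fun x hx => ?_)
  obtain ⟨N, hN, hsub⟩ := exists_mem_nhds_inter_boundary_subset x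
  exact mem_of_superset hN fun y hy hyb => hx (hsub ⟨hy, hyb⟩ ▸ hyb)

theorem finite_boundary [T1Space X] [CompactSpace X] : ((𝓡∂ 1).boundary X).Finite := by
  refine isClosed_boundary.isCompact.finite (isDiscrete_iff_nhdsNE.2 fun x _ => ?_)
  obtain ⟨N, hN, hsub⟩ := exists_mem_nhds_inter_boundary_subset x
  exact inf_principal_eq_bot.2 (mem_nhdsWithin_iff_exists_mem_nhds_inter.2
    ⟨N, hN, fun y ⟨hy, hyx⟩ hyb => hyx (hsub ⟨hy, hyb⟩)⟩)

end OneManifold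

section Pairing

variable {X : Type*} [TopologicalSpace X] [ChartedSpace (EuclideanHalfSpace 1) X]

structure ArcFrom (b : X) where
  γ : ℝ → X
  c : ℝ
  isArc : IsArc γ c
  start : γ 0 = b

def ArcFrom.refl (b : X) : ArcFrom b := ⟨fun _ => b, 0, IsArc.const b, rfl⟩

theorem exists_mem_nhds_forall_arcFrom [T2Space X] {b : X}
    (H : ∀ a : ArcFrom b, 0 < a.c → a.γ a.c ∉ (𝓡∂ 1).boundary X) (x : X) :
    ∃ N ∈ 𝓝 x, ∀ a : ArcFrom b, (a.γ '' Icc 0 a.c ∩ N).Nonempty →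
      ∃ a' : ArcFrom b, x ∈ a'.γ '' Ico 0 a'.c := by
  obtain ⟨σ, p, d, hσ, hp, hp0, hσp, hN⟩ := exists_isArc_mem_nhds x
  refine ⟨_, hN, fun a ha => ?_⟩
  obtain ⟨s₀, hs₀, hext⟩ := a.isArc.exists_arc_to_segment hσ ha
  have hσne : ∀ s ∈ Icc 0 d, s ≠ p → σ s ≠ x := fun s hs hsp h =>
    hsp (hσ.injOn hs ⟨hp.1, hp.2.le⟩ (h.trans hσp.symm))
  have hd : d ∈ Icc 0 d := ⟨hσ.nonneg, le_rfl⟩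
  by_cases hx : x ∈ (𝓡∂ 1).boundary X
  · by_cases hxb : x = b
    · obtain ⟨γ', c', hγ', hγ'0, hγ'c, -⟩ := hext d hd
      have hc' : 0 < c' := by
        refine hγ'.nonneg.lt_of_ne fun h => hσne d hd hp.2.ne' ?_
        rw [← hγ'c, ← h, hγ'0, a.start, hxb]
      exact ⟨⟨γ', c', hγ', hγ'0.trans a.start⟩, 0, ⟨le_rfl, hc'⟩,
        hγ'0.trans (a.start.trans hxb.symm)⟩
    · obtain ⟨γ', c', hγ', hγ'0, hγ'c, -⟩ := hext p ⟨hp.1, hp.2.le⟩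
      have hc' : 0 < c' := by
        refine hγ'.nonneg.lt_of_ne fun h => hxb ?_
        rw [← hσp, ← hγ'c, ← h, hγ'0, a.start]
      refine absurd ?_ (H ⟨γ', c', hγ', hγ'0.trans a.start⟩ hc')
      change γ' c' ∈ _
      rwa [hγ'c, hσp]
  · -- Run through `x` to the far end of the segment, as seen from where `a` first meets it.
    have hp0' : 0 < p := hp.1.lt_of_ne fun h => hx (hp0.1 h.symm)
    set s := if s₀ ≤ p then d else 0
    have hs : s ∈ Icc 0 d := by unfold s; split_ifs; exacts [hd, ⟨le_rfl, hσ.nonneg⟩]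
    have hps : p ∈ uIcc s₀ s := by
      unfold s; split_ifs with h
      · exact Icc_subset_uIcc ⟨h, hp.2.le⟩
      · exact Icc_subset_uIcc' ⟨hp.1, (not_le.1 h).le⟩
    obtain ⟨γ', c', hγ', hγ'0, hγ'c, hsub⟩ := hext s hs
    obtain ⟨t, ht, hxt⟩ := hsub ⟨p, hps, hσp⟩
    refine ⟨⟨γ', c', hγ', hγ'0.trans a.start⟩, t, ⟨ht.1, ht.2.lt_of_ne ?_⟩, hxt⟩
    rintro rfl
    refine hσne s hs ?_ (hγ'c.symm.trans hxt)
    unfold s; split_ifs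
    exacts [hp.2.ne', hp0'.ne]

theorem exists_isArc_boundary [T2Space X] [CompactSpace X] {b : X}
    (hb : b ∈ (𝓡∂ 1).boundary X) :
    ∃ γ c, IsArc γ c ∧ 0 < c ∧ γ 0 = b ∧ γ c ∈ (𝓡∂ 1).boundary X := by
  by_contra! H
  have hstep := exists_mem_nhds_forall_arcFrom fun a ha => H a.γ a.c a.isArc ha a.start
  have hstart : ∀ a : ArcFrom b, a.γ 0 ∈ (𝓡∂ 1).boundary X := fun a => by
    rw [a.start]; exact hb
  set U : ArcFrom b → Set X := fun a => a.γ '' Ico 0 a.c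
  have hUo : ∀ a, IsOpen (U a) := fun a => a.isArc.isOpen_image_Ico (hstart a)
  have : Nonempty (ArcFrom b) := ⟨ArcFrom.refl b⟩
  have hbU : b ∈ ⋃ a, U a := by
    obtain ⟨N, hN, hreach⟩ := hstep b
    obtain ⟨a, ha⟩ := hreach (ArcFrom.refl b) ⟨b, ⟨0, ⟨le_rfl, le_rfl⟩, rfl⟩, mem_of_mem_nhds hN⟩
    exact mem_iUnion.2 ⟨a, ha⟩
  have hclosed : IsClosed (⋃ a, U a) := by
    refine isClosed_of_closure_subset fun x hx => ?_
    obtain ⟨N, hN, hreach⟩ := hstep x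
    obtain ⟨_, hyN, hy⟩ := mem_closure_iff_nhds.1 hx N hN
    obtain ⟨a, t, ht, rfl⟩ := mem_iUnion.1 hy
    obtain ⟨a', ha'⟩ := hreach a ⟨_, ⟨t, Ico_subset_Icc_self ht, rfl⟩, hyN⟩
    exact mem_iUnion.2 ⟨a', ha'⟩
  have hdir : Directed (· ⊆ ·) U := fun a₁ a₂ => by
    rcases a₁.isArc.image_subset_or_image_subset a₂.isArc (a₁.start.trans a₂.start.symm)
      (hstart a₂) with h | h
    · exact ⟨a₂, a₁.isArc.image_Ico_subset_of_image_subset a₂.isArc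
        (a₁.start.trans a₂.start.symm) h, subset_rfl⟩
    · exact ⟨a₁, subset_rfl, a₂.isArc.image_Ico_subset_of_image_subset a₁.isArc
        (a₂.start.trans a₁.start.symm) h⟩
  obtain ⟨a, ha⟩ := isClosed_connectedComponent.isCompact.elim_directed_cover U hUo
    (IsClopen.connectedComponent_subset ⟨hclosed, isOpen_iUnion hUo⟩ hbU) hdir
  have hend : a.γ a.c ∈ connectedComponent b :=
    a.isArc.isPreconnected_image.subset_connectedComponent
      ⟨0, ⟨le_rfl, a.isArc.nonneg⟩, a.start⟩ ⟨a.c, ⟨a.isArc.nonneg, le_rfl⟩, rfl⟩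
  obtain ⟨t, ht, he⟩ := ha hend
  exact ht.2.ne (a.isArc.injOn ⟨ht.1, ht.2.le⟩ ⟨a.isArc.nonneg, le_rfl⟩ he)

theorem exists_boundary_inter_connectedComponent_eq_pair [T2Space X] [CompactSpace X] {b : X}
    (hb : b ∈ (𝓡∂ 1).boundary X) :
    ∃ w ≠ b, (𝓡∂ 1).boundary X ∩ connectedComponent b = {b, w} := by
  obtain ⟨γ, c, hγ, hc, rfl, hw⟩ := exists_isArc_boundary hb
  refine ⟨γ c, fun h => hc.ne' (hγ.injOn ⟨hγ.nonneg, le_rfl⟩ ⟨le_rfl, hγ.nonneg⟩ h), ?_⟩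
  rw [← hγ.image_eq_connectedComponent hc hb hw]
  ext y
  constructor
  · rintro ⟨hy, t, ht, rfl⟩
    rcases ht.1.eq_or_lt with rfl | ht0
    · exact Or.inl rfl
    rcases ht.2.eq_or_lt with rfl | htc
    · exact Or.inr rfl
    exact absurd hy (hγ.apply_notMem_boundary ⟨ht0, htc⟩)
  · rintro (rfl | rfl)
    exacts [⟨hb, 0, ⟨le_rfl, hγ.nonneg⟩, rfl⟩, ⟨hw, c, ⟨hγ.nonneg, le_rfl⟩, rfl⟩]

end Pairing

theorem Set.Finite.even_ncard_of_forall_ncard_eq_two {α β : Type*} {s : Set α} (hs : s.Finite)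
    (f : α → β) (h : ∀ x ∈ s, {y ∈ s | f y = f x}.ncard = 2) : Even s.ncard := by
  classical
  lift s to Finset α using hs
  rw [ncard_coe_finset, Finset.card_eq_sum_card_image f s]
  refine Finset.even_sum _ fun _ hb => ?_
  obtain ⟨x, hx, rfl⟩ := Finset.mem_image.1 hb
  rw [← ncard_coe_finset, Finset.coe_filter]
  exact (congrArg Even (h x hx)).mpr even_two

/-- A compact topological 1-manifold with boundary has a finite
boundary with an even number of points. -/
theorem stmt2 {X : Type*} [TopologicalSpace X] [T2Space X] [CompactSpace X]
    [ChartedSpace (EuclideanHalfSpace 1) X] :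
    ((𝓡∂ 1).boundary X).Finite ∧ Even (((𝓡∂ 1).boundary X).ncard) := by
  refine ⟨finite_boundary, finite_boundary.even_ncard_of_forall_ncard_eq_two connectedComponent
    fun b hb => ?_⟩
  obtain ⟨w, hwb, hw⟩ := exists_boundary_inter_connectedComponent_eq_pair hb
  have : {y ∈ (𝓡∂ 1).boundary X | connectedComponent y = connectedComponent b} =
      (𝓡∂ 1).boundary X ∩ connectedComponent b := by
    ext y
    simp [connectedComponent_eq_iff_mem]
  rw [this, hw, ncard_pair hwb.symm]
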